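/- arXiv:1906.08821 — 2 statements merged into one kernel-verified Lean document; each statement's English description precedes it below -/
import Mathlib

section
/- Let k be a field of prime characteristic p, let n be an integer with n > 1 that is not divisible by p, define φ(e) := n·p^e − dim_k (k[X,Y]/(X^{p^e}, Y^{p^e}, X^n − Y^n)) for each nonnegative integer e, let ω be the multiplicative order of p modulo n, and let π be the minimal positive period of φ (i.e., the least positive integer π such that φ(e + π) = φ(e) for all nonnegative integers e). Then π = ω or 2·π = ω. -/
/-!
Modulo `X^n - Y^n` every monomial `x^a y^b` reduces to `x^(a % n) y^(b + n (a / n))`, and with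
`q = p^e` the quotient `k[X,Y]/(X^q, Y^q, X^n - Y^n)` has the monomial basis `x^i y^j` with
`i < n` and `j < q` if `i < q % n`, `j < n (q / n)` otherwise. Its dimension is
`n² (q / n) + (q % n)²`, so `φ e = r (n - r)` with `r = p^e % n`: `φ` only depends on `p^e`
in `ZMod n`, and `ω` is a period. Comparing `φ π = φ 0 = n - 1` forces `r ∈ {1, n - 1}`,
i.e. `p^π = ±1` in `ZMod n`, so `ω ∣ 2π`; together with `π ≤ ω` this leaves `ω = π` or
`ω = 2π`.
-/

open MvPolynomial

section Dimension

noncomputable def boxIdeal (k : Type*) [Field k] (n q : ℕ) : Ideal (MvPolynomial (Fin 2) k) :=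
  Ideal.span {X 0 ^ q, X 1 ^ q, X 0 ^ n - X 1 ^ n}

def columnHeight (n q i : ℕ) : ℕ := if i < q % n then q else n * (q / n)

abbrev BoxIndex (n q : ℕ) := Σ i : Fin n, Fin (columnHeight n q i)

/-- Coordinates of `x^a y^b ≡ x^(a % n) y^(b + n (a / n))`, which vanish outside the box. -/
def normalCoords (k : Type*) [Field k] (n q a b : ℕ) : BoxIndex n q → k :=
  fun t => if (t.1 : ℕ) = a % n ∧ (t.2 : ℕ) = b + n * (a / n) then 1 else 0

noncomputable def normalForm (k : Type*) [Field k] (n q : ℕ) :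
    MvPolynomial (Fin 2) k →ₗ[k] (BoxIndex n q → k) :=
  (basisMonomials (Fin 2) k).constr k fun d => normalCoords k n q (d 0) (d 1)

noncomputable def boxMonomial (k : Type*) [Field k] (n q : ℕ) (t : BoxIndex n q) :
    MvPolynomial (Fin 2) k ⧸ boxIdeal k n q :=
  Ideal.Quotient.mk _ (X 0 ^ (t.1 : ℕ) * X 1 ^ (t.2 : ℕ))

variable {k : Type*} [Field k] {n q : ℕ}

lemma columnHeight_le (i : ℕ) : columnHeight n q i ≤ q := by
  unfold columnHeight
  split
  · exact le_rfl
  · exact Nat.mul_div_le q n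

lemma columnHeight_mod_le_of_le (hn : 0 < n) {a : ℕ} (ha : q ≤ a) :
    columnHeight n q (a % n) ≤ n * (a / n) := by
  have hq := Nat.div_add_mod q n
  have ha' := Nat.div_add_mod a n
  unfold columnHeight
  split_ifs with h
  · have hlt : q / n < a / n := by
      by_contra! hle
      have := Nat.mul_le_mul_left n hle
      omega
    calc q ≤ n * (q / n) + n := by have := Nat.mod_lt q hn; omega
      _ = n * (q / n + 1) := (mul_add_one n _).symm
      _ ≤ n * (a / n) := Nat.mul_le_mul_left n hlt
  · exact Nat.mul_le_mul_left n (Nat.div_le_div_right ha)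

lemma boxIndex_ext_iff {s t : BoxIndex n q} :
    s = t ↔ (s.1 : ℕ) = t.1 ∧ (s.2 : ℕ) = t.2 := by
  obtain ⟨i, j⟩ := s
  obtain ⟨i', j'⟩ := t
  constructor
  · rintro ⟨⟩
    exact ⟨rfl, rfl⟩
  · rintro ⟨h1, h2⟩
    obtain rfl := Fin.ext h1
    obtain rfl := Fin.ext h2
    rfl

lemma normalCoords_add_left (hn : 0 < n) (a b : ℕ) :
    normalCoords k n q (a + n) b = normalCoords k n q a (b + n) := by
  have hb : b + n * (a / n + 1) = b + n + n * (a / n) := by ring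
  funext t
  simp only [normalCoords, Nat.add_mod_right, Nat.add_div_right a hn, hb]

lemma normalCoords_eq_zero_of_le_left (hn : 0 < n) {a : ℕ} (ha : q ≤ a) (b : ℕ) :
    normalCoords k n q a b = 0 := by
  funext ⟨⟨i, hi⟩, j, hj⟩
  have := columnHeight_mod_le_of_le hn ha
  simp only [normalCoords, Pi.zero_apply, ite_eq_right_iff, and_imp]
  rintro rfl h
  have hj' : j < columnHeight n q (a % n) := hj
  omega

lemma normalCoords_eq_zero_of_le_right {b : ℕ} (hb : q ≤ b) (a : ℕ) :
    normalCoords k n q a b = 0 := by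
  funext t
  have ht := t.2.isLt
  have := columnHeight_le (n := n) (q := q) t.1
  simp only [normalCoords, Pi.zero_apply, ite_eq_right_iff, and_imp]
  omega

lemma normalCoords_boxIndex (t : BoxIndex n q) :
    normalCoords k n q t.1 t.2 = Pi.single t 1 := by
  funext s
  simp only [normalCoords, Nat.mod_eq_of_lt t.1.isLt, Nat.div_eq_of_lt t.1.isLt, mul_zero,
    add_zero, Pi.single_apply, ← boxIndex_ext_iff]

lemma monomial_one_eq_X_pow_mul_X_pow (d : Fin 2 →₀ ℕ) :
    (monomial d 1 : MvPolynomial (Fin 2) k) = X 0 ^ d 0 * X 1 ^ d 1 := by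
  rw [monomial_eq, C_1, one_mul, Finsupp.prod_fintype _ _ fun _ => pow_zero _, Fin.prod_univ_two]

lemma normalForm_X_pow_mul_X_pow (a b : ℕ) :
    normalForm k n q (X 0 ^ a * X 1 ^ b) = normalCoords k n q a b := by
  rw [X_pow_eq_monomial, X_pow_eq_monomial, monomial_mul, one_mul]
  have := (basisMonomials (Fin 2) k).constr_basis k
    (fun d => normalCoords k n q (d 0) (d 1)) (Finsupp.single 0 a + Finsupp.single 1 b)
  simpa [normalForm] using this

lemma normalForm_mul_eq_zero {f : MvPolynomial (Fin 2) k}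
    (hf : ∀ a b, normalForm k n q (X 0 ^ a * X 1 ^ b * f) = 0) (g : MvPolynomial (Fin 2) k) :
    normalForm k n q (g * f) = 0 := by
  have : (normalForm k n q).comp (LinearMap.mulRight k f) = 0 :=
    (basisMonomials (Fin 2) k).ext fun d => by simpa [monomial_one_eq_X_pow_mul_X_pow] using hf _ _
  exact LinearMap.congr_fun this g

lemma normalForm_eq_zero_of_mem (hn : 0 < n) {f : MvPolynomial (Fin 2) k}
    (hf : f ∈ boxIdeal k n q) : normalForm k n q f = 0 := by
  suffices ∀ g, normalForm k n q (g * f) = 0 by simpa using this 1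
  induction hf using Submodule.span_induction with
  | mem f hf =>
    rcases hf with rfl | rfl | rfl
    · refine normalForm_mul_eq_zero fun a b => ?_
      rw [show (X 0 ^ a * X 1 ^ b * X 0 ^ q : MvPolynomial (Fin 2) k) = X 0 ^ (a + q) * X 1 ^ b by
          ring,
        normalForm_X_pow_mul_X_pow, normalCoords_eq_zero_of_le_left hn (Nat.le_add_left q a)]
    · refine normalForm_mul_eq_zero fun a b => ?_
      rw [show (X 0 ^ a * X 1 ^ b * X 1 ^ q : MvPolynomial (Fin 2) k) = X 0 ^ a * X 1 ^ (b + q) by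
          ring,
        normalForm_X_pow_mul_X_pow, normalCoords_eq_zero_of_le_right (Nat.le_add_left q b)]
    · refine normalForm_mul_eq_zero fun a b => ?_
      rw [show (X 0 ^ a * X 1 ^ b * (X 0 ^ n - X 1 ^ n) : MvPolynomial (Fin 2) k) =
          X 0 ^ (a + n) * X 1 ^ b - X 0 ^ a * X 1 ^ (b + n) by ring,
        map_sub, normalForm_X_pow_mul_X_pow, normalForm_X_pow_mul_X_pow,
        normalCoords_add_left hn, sub_self]
  | zero => simp
  | add f f' _ _ hf hf' =>
    intro g
    rw [mul_add, map_add, hf, hf', add_zero]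
  | smul a f _ hf =>
    intro g
    rw [smul_eq_mul, ← mul_assoc, hf]

lemma mk_X_pow_add_mul (a b s : ℕ) :
    Ideal.Quotient.mk (boxIdeal k n q) (X 0 ^ (a + n * s) * X 1 ^ b) =
      Ideal.Quotient.mk (boxIdeal k n q) (X 0 ^ a * X 1 ^ (b + n * s)) := by
  induction s generalizing b with
  | zero => simp
  | succ s ih =>
    have step : X 0 ^ (a + n * (s + 1)) * X 1 ^ b - X 0 ^ (a + n * s) * X 1 ^ (b + n) =
        (X 0 ^ (a + n * s) * X 1 ^ b * (X 0 ^ n - X 1 ^ n) : MvPolynomial (Fin 2) k) := by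
      ring
    rw [show b + n * (s + 1) = b + n + n * s by ring, ← ih, Ideal.Quotient.eq, step]
    exact Ideal.mul_mem_left _ _ (Ideal.subset_span (by simp))

lemma mk_eq_zero_of_columnHeight_le {a b : ℕ} (hb : columnHeight n q a ≤ b) :
    Ideal.Quotient.mk (boxIdeal k n q) (X 0 ^ a * X 1 ^ b) = 0 := by
  unfold columnHeight at hb
  split_ifs at hb with ha
  · rw [Ideal.Quotient.eq_zero_iff_mem, ← Nat.sub_add_cancel hb, pow_add, ← mul_assoc]
    exact Ideal.mul_mem_left _ _ (Ideal.subset_span (by simp))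
  · obtain ⟨c, rfl⟩ := Nat.exists_eq_add_of_le hb
    have hq : q ≤ a + n * (q / n) := by have := Nat.div_add_mod q n; omega
    rw [add_comm, ← mk_X_pow_add_mul, Ideal.Quotient.eq_zero_iff_mem, ← Nat.sub_add_cancel hq,
      pow_add, mul_comm, ← mul_assoc]
    exact Ideal.mul_mem_left _ _ (Ideal.subset_span (by simp))

lemma span_boxMonomial_eq_top (hn : 0 < n) :
    Submodule.span k (Set.range (boxMonomial k n q)) = ⊤ := by
  set V := Submodule.span k (Set.range (boxMonomial k n q))
  have hmon : ∀ a b, Ideal.Quotient.mk (boxIdeal k n q) (X 0 ^ a * X 1 ^ b) ∈ V := by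
    intro a b
    rw [← Nat.mod_add_div a n, mk_X_pow_add_mul]
    by_cases hb : b + n * (a / n) < columnHeight n q (a % n)
    · exact Submodule.subset_span ⟨⟨⟨a % n, Nat.mod_lt a hn⟩, ⟨_, hb⟩⟩, rfl⟩
    · rw [mk_eq_zero_of_columnHeight_le (not_lt.mp hb)]
      exact V.zero_mem
  have hsurj : LinearMap.range (Ideal.Quotient.mkₐ k (boxIdeal k n q)).toLinearMap = ⊤ :=
    LinearMap.range_eq_top.mpr (Ideal.Quotient.mkₐ_surjective k _)
  rw [eq_top_iff, ← hsurj, LinearMap.range_eq_map, ← (basisMonomials (Fin 2) k).span_eq,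
    Submodule.map_span, Submodule.span_le]
  rintro _ ⟨_, ⟨d, rfl⟩, rfl⟩
  simpa [monomial_one_eq_X_pow_mul_X_pow] using hmon (d 0) (d 1)

lemma linearIndependent_boxMonomial (hn : 0 < n) :
    LinearIndependent k (boxMonomial k n q) := by
  rw [Fintype.linearIndependent_iff]
  intro g hg t
  have hmem : ∑ s, g s • (X 0 ^ (s.1 : ℕ) * X 1 ^ (s.2 : ℕ)) ∈ boxIdeal k n q := by
    rw [← Ideal.Quotient.eq_zero_iff_mem, ← Ideal.Quotient.mkₐ_eq_mk k, map_sum]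
    simpa [boxMonomial, map_smul] using hg
  simpa [normalForm_X_pow_mul_X_pow, normalCoords_boxIndex, Pi.single_apply]
    using congrFun (normalForm_eq_zero_of_mem hn hmem) t

lemma card_boxIndex (hn : 0 < n) :
    Fintype.card (BoxIndex n q) = n ^ 2 * (q / n) + (q % n) ^ 2 := by
  have hr := (Nat.mod_lt q hn).le
  rw [Fintype.card_sigma]
  simp only [Fintype.card_fin]
  rw [Fin.sum_univ_eq_sum_range (columnHeight n q) n,
    ← Finset.sum_range_add_sum_Ico _ hr]
  unfold columnHeight
  rw [Finset.sum_congr rfl fun i hi => if_pos (Finset.mem_range.mp hi),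
    Finset.sum_congr rfl fun i hi => if_neg (not_lt.mpr (Finset.mem_Ico.mp hi).1)]
  simp only [Finset.sum_const, Finset.card_range, Nat.card_Ico, smul_eq_mul]
  have hq := Nat.div_add_mod q n
  generalize q / n = A at hq ⊢
  generalize q % n = r at hq hr ⊢
  subst hq
  zify [hr]
  ring

theorem finrank_quotient_boxIdeal (hn : 0 < n) :
    Module.finrank k (MvPolynomial (Fin 2) k ⧸ boxIdeal k n q) =
      n ^ 2 * (q / n) + (q % n) ^ 2 := by
  rw [Module.finrank_eq_card_basis (Module.Basis.mk (linearIndependent_boxMonomial hn)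
    (span_boxMonomial_eq_top hn).ge), card_boxIndex hn]

lemma mul_sub_finrank_quotient_boxIdeal (hn : 0 < n) :
    (n : ℤ) * q - Module.finrank k (MvPolynomial (Fin 2) k ⧸ boxIdeal k n q) =
      ((q : ZMod n).val : ℤ) * (n - (q : ZMod n).val) := by
  have hq : (n : ℤ) * (q / n : ℕ) + (q % n : ℕ) = q := by exact_mod_cast Nat.div_add_mod q n
  rw [finrank_quotient_boxIdeal hn, ZMod.val_natCast]
  push_cast at hq ⊢
  linear_combination (-(n : ℤ)) * hq

end Dimension

lemma ZMod.eq_one_or_eq_neg_one_of_val_mul_sub_val {n : ℕ} [NeZero n] {x : ZMod n}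
    (h : (x.val : ℤ) * (n - x.val) = n - 1) : x = 1 ∨ x = -1 := by
  have hx : x = ((x.val : ℤ) : ZMod n) := by simp
  have hfac : ((x.val : ℤ) - 1) * ((n - 1) - x.val) = 0 := by linear_combination h
  rcases mul_eq_zero.mp hfac with h1 | h1
  · left
    rw [hx, show (x.val : ℤ) = 1 by linarith, Int.cast_one]
  · right
    rw [hx, show (x.val : ℤ) = n - 1 by linarith]
    simp

lemma orderOf_eq_or_eq_two_mul {G : Type*} [Monoid G] {u : G} {m : ℕ} (hm : 0 < m)
    (h : u ^ (2 * m) = 1) (hle : m ≤ orderOf u) : orderOf u = m ∨ orderOf u = 2 * m := by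
  obtain ⟨c, hc⟩ := orderOf_dvd_of_pow_eq_one h
  have hc2 : c ≤ 2 := by
    by_contra! hc3
    have := Nat.mul_le_mul hle hc3
    omega
  interval_cases c <;> omega

theorem stmt3_general {k : Type*} [Field k] (p : ℕ)
    (n : ℕ) (hn : 1 < n)
    (φ : ℕ → ℤ)
    (hφ : ∀ e : ℕ, φ e = (n : ℤ) * (p : ℤ) ^ e -
      (Module.finrank k (MvPolynomial (Fin 2) k ⧸
        Ideal.span {(X 0 : MvPolynomial (Fin 2) k) ^ p ^ e, X 1 ^ p ^ e,
          X 0 ^ n - X 1 ^ n}) : ℤ))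
    (ω : ℕ) (hω : ω = orderOf ((p : ZMod n)))
    (π : ℕ) (hπ : IsLeast {m : ℕ | 0 < m ∧ ∀ e : ℕ, φ (e + m) = φ e} π) :
    π = ω ∨ 2 * π = ω := by
  have : NeZero n := ⟨by omega⟩
  have hφu : ∀ e, φ e = (((p : ZMod n) ^ e).val : ℤ) * (n - ((p : ZMod n) ^ e).val) := by
    intro e
    have := mul_sub_finrank_quotient_boxIdeal (k := k) (n := n) (q := p ^ e) (by omega)
    push_cast at this
    exact (hφ e).trans this
  obtain ⟨⟨hπ0, hper⟩, hmin⟩ := hπ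
  have hsq : (p : ZMod n) ^ (2 * π) = 1 := by
    have h0 := hper 0
    rw [hφu, hφu, zero_add, pow_zero, ZMod.val_one_eq_one_mod, Nat.mod_eq_of_lt hn,
      Nat.cast_one, one_mul] at h0
    rcases ZMod.eq_one_or_eq_neg_one_of_val_mul_sub_val h0 with h | h <;>
      simp [pow_mul', h]
  have hω0 : 0 < ω := hω ▸ orderOf_pos_iff.mpr
    (isOfFinOrder_iff_pow_eq_one.mpr ⟨_, by omega, hsq⟩)
  have hπω : π ≤ ω := hmin ⟨hω0, fun e => by
    rw [hφu, hφu, pow_add, hω, pow_orderOf_eq_one, mul_one]⟩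
  subst hω
  rcases orderOf_eq_or_eq_two_mul hπ0 hsq hπω with h | h <;> omega

/-- Theorem 1(2), second half: the minimal positive period `π` of the periodic term `φ`
satisfies `π = ω` or `2π = ω`, where `ω` is the multiplicative order of `p` modulo `n`. -/
theorem stmt3 {k : Type*} [Field k] (p : ℕ) (hp : p.Prime) [CharP k p]
    (n : ℕ) (hn : 1 < n) (hpn : ¬ p ∣ n)
    (φ : ℕ → ℤ)
    (hφ : ∀ e : ℕ, φ e = (n : ℤ) * (p : ℤ) ^ e -
      (Module.finrank k (MvPolynomial (Fin 2) k ⧸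
        Ideal.span {(X 0 : MvPolynomial (Fin 2) k) ^ p ^ e, X 1 ^ p ^ e,
          X 0 ^ n - X 1 ^ n}) : ℤ))
    (ω : ℕ) (hω : ω = orderOf ((p : ZMod n)))
    (π : ℕ) (hπ : IsLeast {m : ℕ | 0 < m ∧ ∀ e : ℕ, φ (e + m) = φ e} π) :
    π = ω ∨ 2 * π = ω :=
  stmt3_general p n hn φ hφ ω hω π hπ
end

section
/- For every positive integer π, there exist prime numbers p and n with n > 1 and p not dividing n such that the function φ defined by φ(e) := n·p^e − dim_{Z/pZ} ((Z/pZ)[X,Y]/(X^{p^e}, Y^{p^e}, X^n − Y^n)) for nonnegative integers e is periodic with minimal positive period exactly π. -/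
/-!
Modulo `X^n - Y^n` a monomial `X^i Y^j` reduces to `X^(i mod n) Y^(j + n⌊i/n⌋)`; modulo
`(X^q, Y^q, X^n - Y^n)` the reduced monomials with `Y`-degree `< q` that are not multiples of the
corner `X^(q mod n) Y^(n⌊q/n⌋) ≡ X^q` form a basis, their independence being witnessed by the
normal-form map. So the quotient has dimension `nq - r(n - r)` with `r = q mod n`, and for
`q = p^e` the function `φ(e) = r(n - r)` depends only on `±p^e ∈ ZMod n`. Taking a prime
`n ≡ 1 (mod 2π)` and, by Dirichlet, a prime `p` of order `2π` modulo `n`, we get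
`φ(e + m) = φ(e)` for all `e` iff `p^m ≡ ±1 (mod n)` iff `π ∣ m`.
-/

open MvPolynomial

namespace HilbertKunz

variable (k : Type*) [CommRing k] (n q : ℕ)

noncomputable def ideal : Ideal (MvPolynomial (Fin 2) k) :=
  Ideal.span {X 0 ^ q, X 1 ^ q, X 0 ^ n - X 1 ^ n}

def staircase : Finset (ℕ × ℕ) :=
  Finset.range n ×ˢ Finset.range q \ Finset.Ico (q % n) n ×ˢ Finset.Ico (q / n * n) q

def reduce (i j : ℕ) : ℕ × ℕ := (i % n, j + i / n * n)

variable {k n q}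

lemma card_staircase : (staircase n q).card + (n - q % n) * (q % n) = n * q := by
  have hsub : Finset.Ico (q % n) n ×ˢ Finset.Ico (q / n * n) q ⊆
      Finset.range n ×ˢ Finset.range q :=
    Finset.product_subset_product (fun i hi => by simp_all) (fun j hj => by simp_all)
  have hmod : q - q / n * n = q % n := by have := Nat.div_add_mod' q n; omega
  simpa [staircase, Finset.card_product, hmod] using Finset.card_sdiff_add_card_eq_card hsub

lemma X_zero_pow_mem : (X 0 : MvPolynomial (Fin 2) k) ^ q ∈ ideal k n q :=
  Ideal.subset_span (by simp)

lemma X_one_pow_mem : (X 1 : MvPolynomial (Fin 2) k) ^ q ∈ ideal k n q :=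
  Ideal.subset_span (by simp)

lemma X_zero_pow_sub_X_one_pow_mem : (X 0 : MvPolynomial (Fin 2) k) ^ n - X 1 ^ n ∈ ideal k n q :=
  Ideal.subset_span (by simp)

lemma X_pow_mul_X_pow_sub_reduce_mem (i j : ℕ) :
    (X 0 : MvPolynomial (Fin 2) k) ^ i * X 1 ^ j
      - X 0 ^ (reduce n i j).1 * X 1 ^ (reduce n i j).2 ∈ ideal k n q := by
  obtain ⟨t, ht⟩ := sub_dvd_pow_sub_pow ((X 0 : MvPolynomial (Fin 2) k) ^ n) (X 1 ^ n) (i / n)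
  have hi : (X 0 : MvPolynomial (Fin 2) k) ^ i = X 0 ^ (i % n) * (X 0 ^ n) ^ (i / n) := by
    rw [← pow_mul, ← pow_add, Nat.mod_add_div]
  have : (X 0 : MvPolynomial (Fin 2) k) ^ i * X 1 ^ j - X 0 ^ (i % n) * X 1 ^ (j + i / n * n)
      = X 0 ^ (i % n) * X 1 ^ j * ((X 0 ^ n) ^ (i / n) - (X 1 ^ n) ^ (i / n)) := by
    rw [hi]; ring
  rw [reduce, this, ht]
  exact Ideal.mul_mem_left _ _ (Ideal.mul_mem_right _ _ X_zero_pow_sub_X_one_pow_mem)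

lemma X_pow_mul_X_pow_mem_of_notMem_staircase {b : ℕ × ℕ} (hb : b.1 < n)
    (h : b ∉ staircase n q) :
    (X 0 : MvPolynomial (Fin 2) k) ^ b.1 * X 1 ^ b.2 ∈ ideal k n q := by
  obtain ⟨i, j⟩ := b
  simp only [staircase, Finset.mem_sdiff, Finset.mem_product, Finset.mem_range,
    Finset.mem_Ico] at h
  rcases lt_or_ge j q with hj | hj
  · obtain ⟨⟨hqi, -⟩, hqj, -⟩ : (q % n ≤ i ∧ i < n) ∧ q / n * n ≤ j ∧ j < q := by
      tauto
    have hcorner := X_pow_mul_X_pow_sub_reduce_mem (k := k) (n := n) (q := q) q 0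
    rw [pow_zero, mul_one, Submodule.sub_mem_iff_right _ X_zero_pow_mem, reduce, zero_add]
      at hcorner
    exact Ideal.mem_of_dvd _ (mul_dvd_mul (pow_dvd_pow _ hqi) (pow_dvd_pow _ hqj)) hcorner
  · exact Ideal.mem_of_dvd _ (dvd_mul_of_dvd_right (pow_dvd_pow _ hj) _) X_one_pow_mem

lemma reduce_notMem_staircase_of_le_left (hn : 0 < n) {i : ℕ} (j : ℕ) (hi : q ≤ i) :
    reduce n i j ∉ staircase n q := by
  simp only [reduce, staircase, Finset.mem_sdiff, Finset.mem_product, Finset.mem_range,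
    Finset.mem_Ico, not_and]
  intro ⟨_, hj⟩ hqi
  have hi' := Nat.div_add_mod' i n
  have hq' := Nat.div_add_mod' q n
  have := Nat.mod_lt q hn
  rcases (Nat.div_le_div_right (c := n) hi).lt_or_eq with hlt | heq
  · have : q / n * n + n ≤ i / n * n := by
      simpa [Nat.succ_mul] using Nat.mul_le_mul_right n hlt
    omega
  · rw [heq] at hq' hqi
    exact hqi ⟨by omega, Nat.mod_lt i hn⟩ (by omega) hj

lemma reduce_notMem_staircase_of_le_right (i : ℕ) {j : ℕ} (hj : q ≤ j) :
    reduce n i j ∉ staircase n q := by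
  simp only [reduce, staircase, Finset.mem_sdiff, Finset.mem_product, Finset.mem_range]
  omega

lemma reduce_add_left (hn : 0 < n) (i j : ℕ) : reduce n (n + i) j = reduce n i (j + n) := by
  simp only [reduce, Nat.add_comm n i, Nat.add_div_right i hn]
  ring_nf
  simp

lemma reduce_of_mem_staircase {b : ℕ × ℕ} (hb : b ∈ staircase n q) :
    reduce n b.1 b.2 = b := by
  have : b.1 < n := by simp_all [staircase]
  simp [reduce, Nat.mod_eq_of_lt this, Nat.div_eq_of_lt this]

lemma basisMonomials_fin_two (m : Fin 2 →₀ ℕ) :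
    basisMonomials (Fin 2) k m = X 0 ^ m 0 * X 1 ^ m 1 := by
  simp only [coe_basisMonomials]
  rw [monomial_eq, Finsupp.prod_fintype _ _ (by simp), Fin.prod_univ_two, C_1, one_mul]

variable (k n q) in
noncomputable def normalForm : MvPolynomial (Fin 2) k →ₗ[k] (ℕ × ℕ →₀ k) :=
  (basisMonomials (Fin 2) k).constr k fun m =>
    if reduce n (m 0) (m 1) ∈ staircase n q then Finsupp.single (reduce n (m 0) (m 1)) 1 else 0

lemma normalForm_X_pow_mul_X_pow (i j : ℕ) :
    normalForm k n q (X 0 ^ i * X 1 ^ j) =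
      if reduce n i j ∈ staircase n q then Finsupp.single (reduce n i j) 1 else 0 := by
  have : (X 0 : MvPolynomial (Fin 2) k) ^ i * X 1 ^ j =
      basisMonomials (Fin 2) k (Finsupp.single 0 i + Finsupp.single 1 j) := by
    rw [basisMonomials_fin_two]; simp
  rw [this, normalForm, Module.Basis.constr_basis]
  simp

lemma normalForm_mul_eq_zero {g : MvPolynomial (Fin 2) k}
    (hg : ∀ i j, normalForm k n q (X 0 ^ i * X 1 ^ j * g) = 0) (f : MvPolynomial (Fin 2) k) :
    normalForm k n q (f * g) = 0 := by
  have : (normalForm k n q).comp (LinearMap.mulRight k g) = 0 :=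
    (basisMonomials (Fin 2) k).ext fun m => by
      simpa [basisMonomials_fin_two] using hg (m 0) (m 1)
  exact LinearMap.congr_fun this f

lemma normalForm_eq_zero_of_mem (hn : 0 < n) {z : MvPolynomial (Fin 2) k}
    (hz : z ∈ ideal k n q) : normalForm k n q z = 0 := by
  suffices ∀ f, normalForm k n q (f * z) = 0 by simpa using this 1
  induction hz using Submodule.span_induction with
  | mem g hg =>
    refine normalForm_mul_eq_zero fun i j => ?_
    rcases hg with rfl | rfl | rfl
    · rw [mul_assoc, mul_comm (X 1 ^ j), ← mul_assoc, ← pow_add, normalForm_X_pow_mul_X_pow,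
        if_neg (reduce_notMem_staircase_of_le_left hn j le_add_self)]
    · rw [mul_assoc, ← pow_add, normalForm_X_pow_mul_X_pow,
        if_neg (reduce_notMem_staircase_of_le_right i le_add_self)]
    · have hx : (X 0 : MvPolynomial (Fin 2) k) ^ i * X 1 ^ j * X 0 ^ n = X 0 ^ (n + i) * X 1 ^ j :=
        by ring
      have hy : (X 0 : MvPolynomial (Fin 2) k) ^ i * X 1 ^ j * X 1 ^ n = X 0 ^ i * X 1 ^ (j + n) :=
        by ring
      rw [mul_sub, map_sub, hx, hy, normalForm_X_pow_mul_X_pow, normalForm_X_pow_mul_X_pow,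
        reduce_add_left hn, sub_self]
  | zero => simp
  | add x y _ _ hx hy => simp [mul_add, hx, hy]
  | smul a x _ hx => simpa [mul_assoc] using fun f => hx (f * a)

variable (k n q) in
noncomputable def monomialClass (b : ℕ × ℕ) : MvPolynomial (Fin 2) k ⧸ ideal k n q :=
  Ideal.Quotient.mk _ (X 0 ^ b.1 * X 1 ^ b.2)

lemma linearIndependent_staircase (hn : 0 < n) :
    LinearIndependent k fun b : staircase n q => monomialClass k n q b := by
  let normalForm' := ((ideal k n q).restrictScalars k).liftQ (normalForm k n q)
    (fun _ hz => LinearMap.mem_ker.mpr <|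
      normalForm_eq_zero_of_mem hn ((Submodule.restrictScalars_mem k _ _).mp hz)) ∘ₗ
    (Submodule.Quotient.restrictScalarsEquiv k (ideal k n q)).symm.toLinearMap
  refine LinearIndependent.of_comp normalForm' ?_
  have : normalForm' ∘ (fun b : staircase n q => monomialClass k n q b) =
      fun b : staircase n q => Finsupp.single (b : ℕ × ℕ) (1 : k) := by
    ext1 b
    rw [Function.comp_apply, monomialClass, ← Ideal.Quotient.mk_eq_mk, LinearMap.comp_apply,
      LinearEquiv.coe_coe, Submodule.Quotient.restrictScalarsEquiv_symm_mk, Submodule.liftQ_apply,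
      normalForm_X_pow_mul_X_pow, reduce_of_mem_staircase b.2, if_pos b.2]
  rw [this]
  exact (Finsupp.linearIndependent_single_one k (ℕ × ℕ)).comp _ Subtype.val_injective

lemma monomialClass_mem_span_staircase (hn : 0 < n) (i j : ℕ) :
    monomialClass k n q (i, j) ∈
      Submodule.span k (Set.range fun b : staircase n q => monomialClass k n q b) := by
  rw [monomialClass, Ideal.Quotient.eq.mpr (X_pow_mul_X_pow_sub_reduce_mem i j)]
  by_cases h : reduce n i j ∈ staircase n q
  · exact Submodule.subset_span ⟨⟨_, h⟩, rfl⟩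
  · rw [Ideal.Quotient.eq_zero_iff_mem.mpr
      (X_pow_mul_X_pow_mem_of_notMem_staircase (Nat.mod_lt i hn) h)]
    exact zero_mem _

lemma span_staircase (hn : 0 < n) :
    ⊤ ≤ Submodule.span k (Set.range fun b : staircase n q => monomialClass k n q b) := by
  have hmk : Submodule.map (Ideal.Quotient.mkₐ k (ideal k n q)).toLinearMap ⊤ = ⊤ := by
    rw [Submodule.map_top, LinearMap.range_eq_top]
    exact Ideal.Quotient.mkₐ_surjective k _
  rw [← hmk, ← (basisMonomials (Fin 2) k).span_eq, Submodule.map_span, Submodule.span_le]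
  rintro _ ⟨_, ⟨m, rfl⟩, rfl⟩
  rw [AlgHom.toLinearMap_apply, basisMonomials_fin_two]
  exact monomialClass_mem_span_staircase hn (m 0) (m 1)

variable (k) in
theorem finrank_quotient_add_eq [Nontrivial k] (hn : 0 < n) :
    Module.finrank k (MvPolynomial (Fin 2) k ⧸ ideal k n q) + (n - q % n) * (q % n) = n * q := by
  rw [Module.finrank_eq_card_basis
    (Module.Basis.mk (linearIndependent_staircase hn) (span_staircase hn)),
    Fintype.card_coe, card_staircase]

end HilbertKunz

theorem ZMod.val_mul_val_neg_eq_iff {N : ℕ} [Fact N.Prime] {a b : ZMod N} :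
    a.val * (-a).val = b.val * (-b).val ↔ a = b ∨ a = -b := by
  refine ⟨fun h => ?_, by rintro (rfl | rfl) <;> simp [mul_comm]⟩
  have : a * -a = b * -b := by simpa using congrArg (Nat.cast : ℕ → ZMod N) h
  exact sq_eq_sq_iff_eq_or_eq_neg.mp (by linear_combination -this)

theorem ZMod.sub_val_mul_val {N : ℕ} [NeZero N] (a : ZMod N) :
    (N - a.val) * a.val = (-a).val * a.val := by
  rw [ZMod.neg_val]
  split_ifs with h <;> simp [h]

theorem isLeast_period_of_isPrimitiveRoot {N : ℕ} [Fact N.Prime] {x : ZMod N} {π : ℕ}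
    (hπ : 0 < π) (hx : IsPrimitiveRoot x (2 * π)) {f : ℕ → ℤ}
    (hf : ∀ e, f e = (x ^ e).val * (-x ^ e).val) :
    IsLeast {m : ℕ | 0 < m ∧ ∀ e, f (e + m) = f e} π := by
  have hf' : ∀ e e', f e = f e' ↔ x ^ e = x ^ e' ∨ x ^ e = -x ^ e' := fun e e' => by
    rw [hf, hf, ← ZMod.val_mul_val_neg_eq_iff]; exact_mod_cast Iff.rfl
  have hxπ : x ^ π = -1 := by
    refine IsPrimitiveRoot.eq_neg_one_of_two_right ?_
    simpa [hπ.ne'] using hx.pow_of_dvd hπ.ne' (dvd_mul_left π 2)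
  refine ⟨⟨hπ, fun e => (hf' _ _).mpr (Or.inr (by rw [pow_add, hxπ]; ring))⟩, ?_⟩
  rintro m ⟨hm, hper⟩
  have hxm : x ^ m = 1 ∨ x ^ m = -1 := by simpa using (hf' _ _).mp (hper 0)
  have : 2 * π ∣ 2 * m := (hx.pow_eq_one_iff_dvd _).mp <| by
    rw [mul_comm, pow_mul]; rcases hxm with h | h <;> simp [h]
  exact Nat.le_of_dvd hm (Nat.dvd_of_mul_dvd_mul_left two_pos this)

theorem exists_primes_isPrimitiveRoot_natCast {m : ℕ} (hm : m ≠ 0) :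
    ∃ p N : ℕ, p.Prime ∧ N.Prime ∧ IsPrimitiveRoot (p : ZMod N) m := by
  obtain ⟨N, hN, -, hNm⟩ := Nat.exists_prime_gt_modEq_one 0 hm
  have : Fact N.Prime := ⟨hN⟩
  obtain ⟨g, hg⟩ := IsCyclic.exists_ofOrder_eq_natCard (α := (ZMod N)ˣ)
  have hmg : m ∣ orderOf g := by
    rw [hg, Nat.card_eq_fintype_card, ZMod.card_units]
    exact (Nat.modEq_iff_dvd' hN.one_le).mp hNm.symm
  have hu := orderOf_pow_orderOf_div (by rw [hg]; exact Nat.card_pos.ne') hmg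
  obtain ⟨p, -, hp, hpu⟩ := Nat.forall_exists_prime_gt_and_eq_mod (g ^ (orderOf g / m)).isUnit 0
  have hroot := IsPrimitiveRoot.orderOf (g ^ (orderOf g / m))
  rw [hu] at hroot
  exact ⟨p, N, hp, hN, hpu ▸ IsPrimitiveRoot.coe_units_iff.mpr hroot⟩

/-- Main Theorem of the paper: for every positive integer `π` there are primes `p` and
`n` with `p ∤ n` such that the periodic term `φ` of the Hilbert--Kunz function of
`(ℤ/pℤ)[[x,y]]/(x^n - y^n)` has minimal positive period exactly `π`. -/
theorem stmt8 (π : ℕ) (hπ : 0 < π) :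
    ∃ p n : ℕ, p.Prime ∧ n.Prime ∧ 1 < n ∧ ¬ p ∣ n ∧
      ∃ φ : ℕ → ℤ,
        (∀ e : ℕ, φ e = (n : ℤ) * (p : ℤ) ^ e -
          (Module.finrank (ZMod p) (MvPolynomial (Fin 2) (ZMod p) ⧸
            Ideal.span {(X 0 : MvPolynomial (Fin 2) (ZMod p)) ^ p ^ e, X 1 ^ p ^ e,
              X 0 ^ n - X 1 ^ n}) : ℤ)) ∧
        IsLeast {m : ℕ | 0 < m ∧ ∀ e : ℕ, φ (e + m) = φ e} π := by
  obtain ⟨p, n, hp, hn, hx⟩ := exists_primes_isPrimitiveRoot_natCast (m := 2 * π) (by omega)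
  have : Fact p.Prime := ⟨hp⟩
  have : Fact n.Prime := ⟨hn⟩
  have hpn : ¬ p ∣ n := by
    rw [Nat.prime_dvd_prime_iff_eq hp hn]
    rintro rfl
    exact hx.ne_zero (by omega) (ZMod.natCast_self p)
  refine ⟨p, n, hp, hn, hn.one_lt, hpn,
    fun e => ((p : ZMod n) ^ e).val * (-(p : ZMod n) ^ e).val, fun e => ?_,
    isLeast_period_of_isPrimitiveRoot hπ hx fun _ => rfl⟩
  have h := HilbertKunz.finrank_quotient_add_eq (ZMod p) (q := p ^ e) hn.pos
  rw [HilbertKunz.ideal, ← ZMod.val_natCast, ZMod.sub_val_mul_val, Nat.cast_pow] at h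
  zify at h
  linear_combination h
end
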